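/- Let (λ_n) be positive reals with λ_n → ∞, and (t_n), (κ_n) nonnegative and positive sequences respectively with (t_n/λ_n − 1) = O(λ_n^{-1/2}) and (κ_n/λ_n − 1) = O(λ_n^{-1/2}). Then 2(t_n log(t_n/κ_n) − (t_n − κ_n)) − (t_n − κ_n)²/κ_n → 0 as n → ∞. -/

import Mathlib

open Filter Asymptotics
open scoped Topology

/-!
Writing `t = κ (1 + u)`, the difference of the two statistics is `κ φ(u)` with
`φ(u) = 2((1 + u) log (1 + u) - u) - u²` (`bregmanPearsonGap`), and `φ(u) = O(u³)` by the
Taylor expansion of `log (1 + u)`.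
Since `t` and `κ` are both `λ (1 + O(λ^{-1/2}))`, we get `u = O(λ^{-1/2})` and `κ = O(λ)`, so
`κ φ(u) = O(λ · λ^{-3/2}) = O(λ^{-1/2}) → 0`.
-/

lemma log_one_add_sub_taylor_isBigO :
    (fun u : ℝ => Real.log (1 + u) - (u - u ^ 2 / 2)) =O[𝓝 0] fun u => u ^ 3 := by
  refine IsBigO.of_bound 2 ?_
  filter_upwards [Metric.closedBall_mem_nhds (0 : ℝ) (by norm_num : (0 : ℝ) < 1 / 2)] with u hu
  rw [Metric.mem_closedBall, Real.dist_0_eq_abs] at hu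
  have h := Real.abs_log_sub_add_sum_range_le (x := -u) (by rw [abs_neg]; linarith) 2
  simp only [Finset.sum_range_succ, Finset.sum_range_zero, abs_neg, sub_neg_eq_add] at h
  norm_num at h
  have hden : |u| ^ 3 / (1 - |u|) ≤ 2 * |u| ^ 3 := by
    rw [div_le_iff₀ (by linarith)]
    nlinarith [pow_nonneg (abs_nonneg u) 3]
  rw [Real.norm_eq_abs, Real.norm_eq_abs, abs_pow, show Real.log (1 + u) - (u - u ^ 2 / 2) =
    -u + u ^ 2 / 2 + Real.log (1 + u) by ring]
  exact h.trans hden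

noncomputable def bregmanPearsonGap (u : ℝ) : ℝ :=
  2 * ((1 + u) * Real.log (1 + u) - u) - u ^ 2

lemma bregmanPearsonGap_isBigO : bregmanPearsonGap =O[𝓝 0] fun u => u ^ 3 := by
  have hexpand : bregmanPearsonGap = fun u =>
      -u ^ 3 + 2 * (1 + u) * (Real.log (1 + u) - (u - u ^ 2 / 2)) := by
    funext u
    unfold bregmanPearsonGap
    ring
  have hbdd : (fun u : ℝ => 2 * (1 + u)) =O[𝓝 0] fun _ => (1 : ℝ) :=
    (((continuous_const.add continuous_id).const_mul 2).tendsto 0).isBigO_one ℝ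
  rw [hexpand]
  refine (isBigO_refl _ _).neg_left.add ?_
  simpa using hbdd.mul log_one_add_sub_taylor_isBigO

lemma bregman_sub_pearson_eq_mul_gap (t : ℝ) {κ : ℝ} (hκ : κ ≠ 0) :
    2 * (t * Real.log (t / κ) - (t - κ)) - (t - κ) ^ 2 / κ =
      κ * bregmanPearsonGap (t / κ - 1) := by
  rw [bregmanPearsonGap, add_sub_cancel]
  field_simp

lemma div_sub_one_isBigO_of_common_center {α : Type*} {l : Filter α} {x y z g : α → ℝ}
    (hy : ∀ a, y a ≠ 0) (hz : ∀ a, z a ≠ 0)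
    (hx : (fun a => x a / z a - 1) =O[l] g) (hyO : (fun a => y a / z a - 1) =O[l] g)
    (hg : Tendsto g l (𝓝 0)) :
    (fun a => x a / y a - 1) =O[l] g := by
  have hyz : Tendsto (fun a => (y a / z a)⁻¹) l (𝓝 1) := by
    simpa using ((hyO.trans_tendsto hg).add_const 1).inv₀ (by norm_num)
  have := (hx.sub hyO).mul (hyz.isBigO_one ℝ)
  simp only [mul_one] at this
  refine this.congr_left fun a => ?_
  field_simp [hy a, hz a]
  ring

theorem bregman_pearson_equiv_two_centers_general
    (lam t kap : ℕ → ℝ) (hlam : ∀ n, 0 < lam n)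
    (hkap : ∀ n, 0 < kap n)
    (hlim : Tendsto lam atTop atTop)
    (htO : (fun n => t n / lam n - 1) =O[atTop] fun n => (Real.sqrt (lam n))⁻¹)
    (hkO : (fun n => kap n / lam n - 1) =O[atTop] fun n => (Real.sqrt (lam n))⁻¹) :
    Tendsto (fun n => 2 * (t n * Real.log (t n / kap n) - (t n - kap n)) -
      (t n - kap n) ^ 2 / kap n) atTop (𝓝 0) := by
  set g : ℕ → ℝ := fun n => (Real.sqrt (lam n))⁻¹
  have hg : Tendsto g atTop (𝓝 0) :=
    tendsto_inv_atTop_zero.comp (Real.tendsto_sqrt_atTop.comp hlim)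
  have hu : (fun n => t n / kap n - 1) =O[atTop] g :=
    div_sub_one_isBigO_of_common_center (fun n => (hkap n).ne') (fun n => (hlam n).ne') htO hkO hg
  have hkap_lam : kap =O[atTop] lam := by
    have h1 : Tendsto (fun n => kap n / lam n) atTop (𝓝 1) := by
      simpa using (hkO.trans_tendsto hg).add_const 1
    simpa [mul_div_cancel₀ _ (hlam _).ne'] using (isBigO_refl lam atTop).mul (h1.isBigO_one ℝ)
  have hgap : (fun n => bregmanPearsonGap (t n / kap n - 1)) =O[atTop] fun n => g n ^ 3 :=
    (bregmanPearsonGap_isBigO.comp_tendsto (hu.trans_tendsto hg)).trans (hu.pow 3)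
  have hscale : (fun n => lam n * g n ^ 3) = g := by
    funext n
    simp only [g]
    nth_rw 1 [← Real.sq_sqrt (hlam n).le]
    field_simp
  refine ((hscale ▸ hkap_lam.mul hgap).trans_tendsto hg).congr fun n => ?_
  exact (bregman_sub_pearson_eq_mul_gap (t n) (hkap n).ne').symm

/-- If `λ_n → ∞`, `t_n ≥ 0`, `κ_n > 0`, `t_n/λ_n − 1 = O(λ_n^{-1/2})`, and
`κ_n/λ_n − 1 = O(λ_n^{-1/2})`, then
`2(t_n log(t_n/κ_n) − (t_n − κ_n)) − (t_n − κ_n)²/κ_n → 0`. -/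
theorem bregman_pearson_equiv_two_centers
    (lam t kap : ℕ → ℝ) (hlam : ∀ n, 0 < lam n) (ht : ∀ n, 0 ≤ t n)
    (hkap : ∀ n, 0 < kap n)
    (hlim : Tendsto lam atTop atTop)
    (htO : (fun n => t n / lam n - 1) =O[atTop] fun n => (Real.sqrt (lam n))⁻¹)
    (hkO : (fun n => kap n / lam n - 1) =O[atTop] fun n => (Real.sqrt (lam n))⁻¹) :
    Tendsto (fun n => 2 * (t n * Real.log (t n / kap n) - (t n - kap n)) -
      (t n - kap n) ^ 2 / kap n) atTop (𝓝 0) :=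
  bregman_pearson_equiv_two_centers_general lam t kap hlam hkap hlim htO hkO
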